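/- arXiv:2108.12766 — 2 statements merged into one kernel-verified Lean document; each statement's English description precedes it below -/
import Mathlib

section
/- Let m be a positive integer and let λ be a partition with at most 2m parts (padded with zeros so that λ_1, …, λ_{2m} are defined). Then the Young diagram of λ can be tiled by dominoes if and only if the sequence λ_1 + 2m − 1, λ_2 + 2m − 2, …, λ_{2m−1} + 1, λ_{2m} contains exactly m even integers and exactly m odd integers. -/
/-- A partition `λ`, 1-indexed: `λ_i = part i` for `i ≥ 1`. -/
structure PartitionOneIdx where
  part : ℕ → ℕ
  part_zero : part 0 = 0
  antitone : ∀ ⦃i j : ℕ⦄, 1 ≤ i → i ≤ j → part j ≤ part i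
  finite : ∃ N : ℕ, ∀ i : ℕ, N ≤ i → part i = 0

/-- The conjugate partition: `λ'_j = #{i ≥ 1 : λ_i ≥ j}`. -/
noncomputable def conjFn (f : ℕ → ℕ) (j : ℕ) : ℕ :=
  Set.ncard {i : ℕ | 1 ≤ i ∧ j ≤ f i}

/-- The cells of the Young diagram of `λ`. -/
def cellsFn (f : ℕ → ℕ) : Set (ℕ × ℕ) :=
  {p : ℕ × ℕ | 1 ≤ p.1 ∧ 1 ≤ p.2 ∧ p.2 ≤ f p.1}

/-- The hook length of the cell `(i,j)`: `h(i,j) = (λ_i − j) + (λ'_j − i) + 1`. -/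
noncomputable def hookFn (f : ℕ → ℕ) (i j : ℕ) : ℕ :=
  (f i - j) + (conjFn f j - i) + 1

/-- `b(λ) = Σ_{(i,j)∈λ} (−1)^{λ_i + λ'_j − i − j + 1}(λ_i − i)`;
the exponent is replaced by `λ_i + λ'_j + i + j + 1`, which has the same parity. -/
noncomputable def bFn (f : ℕ → ℕ) : ℤ :=
  ∑ᶠ i : ℕ, ∑ j ∈ Finset.Icc 1 (f i),
    (-1 : ℤ) ^ (f i + conjFn f j + i + j + 1) * ((f i : ℤ) - (i : ℤ))

/-- The size `|λ| = Σ_i λ_i`. -/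
noncomputable def sizeFn (f : ℕ → ℕ) : ℕ := ∑ᶠ i : ℕ, f i

/-- A domino: a pair of horizontally or vertically adjacent cells. -/
def IsDomino (d : Set (ℕ × ℕ)) : Prop :=
  ∃ i j : ℕ, d = {(i, j), (i, j + 1)} ∨ d = {(i, j), (i + 1, j)}

/-- The Young diagram of `λ` can be tiled by dominoes. -/
def HasDominoTiling (f : ℕ → ℕ) : Prop :=
  ∃ D : Set (Set (ℕ × ℕ)), (∀ d ∈ D, IsDomino d) ∧
    D.PairwiseDisjoint id ∧ ⋃₀ D = cellsFn f

/-!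
Colour the cell `(i, j)` by the sign `(-1)^(i+j)` and call the signed cell count of a diagram its
charge. Every domino has charge zero, so a tileable diagram has charge zero. Conversely, a
partition that is not a staircase `(k, k-1, …, 1)` has a removable domino, either horizontal at
the end of a row or vertical at the end of two equal rows, and removing it preserves the charge; a
nonempty staircase has nonzero charge, so induction on the number of cells tiles every diagram of
charge zero. Summing row by row, the charge of a partition with at most `2m` parts is
`#{i ≤ 2m | λ_i + 2m - i even} - m`.
-/

open Finset

noncomputable def charge (S : Set (ℕ × ℕ)) : ℤ := ∑ᶠ p ∈ S, (-1) ^ (p.1 + p.2)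

lemma charge_union {S T : Set (ℕ × ℕ)} (hS : S.Finite) (hT : T.Finite) (h : Disjoint S T) :
    charge (S ∪ T) = charge S + charge T :=
  finsum_mem_union h hS hT

lemma IsDomino.finite {d : Set (ℕ × ℕ)} (hd : IsDomino d) : d.Finite := by
  obtain ⟨i, j, rfl | rfl⟩ := hd <;> exact (Set.finite_singleton _).insert _

lemma IsDomino.charge_eq_zero {d : Set (ℕ × ℕ)} (hd : IsDomino d) : charge d = 0 := by
  obtain ⟨i, j, rfl | rfl⟩ := hd <;>
  · rw [charge, finsum_mem_pair (by simp)]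
    ring

lemma charge_eq_zero_of_tiling {S : Set (ℕ × ℕ)} {D : Set (Set (ℕ × ℕ))} (hS : S.Finite)
    (hD : ∀ d ∈ D, IsDomino d) (hdisj : D.PairwiseDisjoint id) (hU : ⋃₀ D = S) :
    charge S = 0 := by
  have hDfin : D.Finite := hS.finite_subsets.subset fun d hd => hU ▸ Set.subset_sUnion_of_mem hd
  rw [← hU, charge, finsum_mem_sUnion hdisj hDfin fun d hd => (hD d hd).finite]
  exact finsum_mem_eq_zero_of_forall_eq_zero fun d hd => (hD d hd).charge_eq_zero

lemma two_mul_sum_Icc_neg_one_pow (i n : ℕ) :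
    2 * ∑ j ∈ Icc 1 n, (-1 : ℤ) ^ (i + j) = (-1) ^ (i + n) - (-1) ^ i := by
  induction n with
  | zero => simp
  | succ n ih =>
    rw [sum_Icc_succ_top (by omega), mul_add, ih]
    ring

lemma cellsFn_subset {f : ℕ → ℕ} {N : ℕ} (hf : ∀ i, N < i → f i = 0) :
    cellsFn f ⊆ ↑(Icc 1 N ×ˢ Icc 1 ((Icc 1 N).sup f)) := by
  rintro ⟨i, j⟩ ⟨hi, hj, hji : j ≤ f i⟩
  have hiN : i ≤ N := by
    by_contra! h
    have := hf i h
    omega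
  simp only [coe_product, Set.mem_prod, coe_Icc, Set.mem_Icc]
  exact ⟨⟨hi, hiN⟩, hj, hji.trans (le_sup (mem_Icc.2 ⟨hi, hiN⟩))⟩

lemma two_mul_charge_cellsFn {f : ℕ → ℕ} {N : ℕ} (hf : ∀ i, N < i → f i = 0) :
    2 * charge (cellsFn f) = ∑ i ∈ Icc 1 N, ((-1) ^ (i + f i) - (-1) ^ i) := by
  have hfin : (cellsFn f).Finite := (Finset.finite_toSet _).subset (cellsFn_subset hf)
  rw [charge, finsum_mem_eq_finite_toFinset_sum _ hfin,
    sum_finset_product _ (Icc 1 N) (fun i => Icc 1 (f i)), mul_sum]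
  · exact sum_congr rfl fun i _ => two_mul_sum_Icc_neg_one_pow i (f i)
  rintro ⟨i, j⟩
  have hfi := hf i
  simp only [Set.Finite.mem_toFinset, cellsFn, Set.mem_ofPred_eq, mem_Icc]
  constructor
  · rintro ⟨hi, hj, hji⟩
    by_contra! h
    omega
  · omega

lemma charge_cellsFn_ne_zero_of_staircase {f : ℕ → ℕ} {k : ℕ} (hk : 1 ≤ k)
    (hf : ∀ i, 1 ≤ i → f i = k + 1 - i) : charge (cellsFn f) ≠ 0 := by
  have h := two_mul_charge_cellsFn (f := f) (N := k) fun i hi => by rw [hf i (by omega)]; omega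
  have hrows : ∑ i ∈ Icc 1 k, (-1 : ℤ) ^ (i + f i) = k * (-1) ^ (k + 1) := by
    have hterm : ∀ i ∈ Icc 1 k, (-1 : ℤ) ^ (i + f i) = (-1) ^ (k + 1) := fun i hi => by
      rw [hf i (mem_Icc.1 hi).1, Nat.add_sub_cancel' (by have := (mem_Icc.1 hi).2; omega)]
    rw [sum_congr rfl hterm, sum_const, Nat.card_Icc, nsmul_eq_mul, Nat.add_sub_cancel]
  have hsign := two_mul_sum_Icc_neg_one_pow 0 k
  simp only [zero_add, pow_zero] at hsign
  intro h0
  rw [h0, sum_sub_distrib, hrows] at h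
  rcases neg_one_pow_eq_or ℤ k with h' | h' <;> rw [pow_succ, h'] at h <;> rw [h'] at hsign <;>
    omega

lemma sum_neg_one_pow_eq_card_even {ι : Type*} (s : Finset ι) (g : ι → ℕ) :
    ∑ i ∈ s, (-1 : ℤ) ^ g i = 2 * #{i ∈ s | Even (g i)} - #s := by
  rw [card_filter, card_eq_sum_ones]
  push_cast
  rw [mul_sum, ← sum_sub_distrib]
  refine sum_congr rfl fun i _ => ?_
  rcases Nat.even_or_odd (g i) with h | h
  · simp [h, h.neg_one_pow]
  · simp [Nat.not_even_iff_odd.2 h, h.neg_one_pow]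

lemma charge_cellsFn_eq_card_even_sub {f : ℕ → ℕ} {m : ℕ}
    (hf : ∀ i, 2 * m < i → f i = 0) :
    charge (cellsFn f) = #{i ∈ Icc 1 (2 * m) | Even (f i + 2 * m - i)} - m := by
  have h := two_mul_charge_cellsFn hf
  have hsign := two_mul_sum_Icc_neg_one_pow 0 (2 * m)
  simp only [zero_add, pow_zero, pow_mul, neg_one_sq, one_pow, sub_self] at hsign
  have hpar : ∑ i ∈ Icc 1 (2 * m), (-1 : ℤ) ^ (i + f i) =
      ∑ i ∈ Icc 1 (2 * m), (-1 : ℤ) ^ (f i + 2 * m - i) := by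
    refine sum_congr rfl fun i hi => ?_
    rw [neg_one_pow_eq_pow_mod_two, neg_one_pow_eq_pow_mod_two (f i + 2 * m - i)]
    congr 1
    have := (mem_Icc.1 hi).2
    omega
  rw [sum_sub_distrib, hpar, sum_neg_one_pow_eq_card_even, Nat.card_Icc] at h
  omega

def ExtendsByDomino (f g : ℕ → ℕ) : Prop :=
  ∃ d, IsDomino d ∧ Disjoint (cellsFn g) d ∧ cellsFn f = cellsFn g ∪ d

namespace ExtendsByDomino

variable {f g : ℕ → ℕ}

lemma hasDominoTiling (h : ExtendsByDomino f g) (hg : HasDominoTiling g) :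
    HasDominoTiling f := by
  obtain ⟨d, hd, hdisj, hfg⟩ := h
  obtain ⟨D, hD, hDdisj, hU⟩ := hg
  refine ⟨insert d D, Set.forall_mem_insert.2 ⟨hd, hD⟩,
    hDdisj.insert fun d' hd' _ => ?_, ?_⟩
  · exact hdisj.symm.mono_right (hU ▸ Set.subset_sUnion_of_mem hd')
  · rw [Set.sUnion_insert, hU, Set.union_comm, hfg]

lemma charge_eq (h : ExtendsByDomino f g) (hg : (cellsFn g).Finite) :
    charge (cellsFn f) = charge (cellsFn g) := by
  obtain ⟨d, hd, hdisj, hfg⟩ := h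
  rw [hfg, charge_union hg hd.finite hdisj, hd.charge_eq_zero, add_zero]

lemma ncard_lt (h : ExtendsByDomino f g) (hf : (cellsFn f).Finite) :
    (cellsFn g).ncard < (cellsFn f).ncard := by
  obtain ⟨d, ⟨i, j, rfl | rfl⟩, hdisj, hfg⟩ := h <;>
  · refine Set.ncard_lt_ncard (Set.ssubset_iff_of_subset (hfg ▸ Set.subset_union_left) |>.2
      ⟨(i, j), hfg ▸ Or.inr (Or.inl rfl),
        fun hij => hdisj.notMem_of_mem_left hij (Or.inl rfl)⟩) hf

end ExtendsByDomino

namespace PartitionOneIdx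

variable (μ : PartitionOneIdx)

lemma finite_cellsFn : (cellsFn μ.part).Finite := by
  obtain ⟨N, hN⟩ := μ.finite
  exact (Finset.finite_toSet _).subset (cellsFn_subset fun i hi => hN i hi.le)

lemma exists_extendsByDomino_of_horizontal {k : ℕ} (hk : 1 ≤ k)
    (h : μ.part (k + 1) + 2 ≤ μ.part k) :
    ∃ ν : PartitionOneIdx, ExtendsByDomino μ.part ν.part := by
  obtain ⟨N, hN⟩ := μ.finite
  refine ⟨⟨Function.update μ.part k (μ.part k - 2), ?_, ?_,
    ⟨max N (k + 1), fun i hi => ?_⟩⟩,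
    {(k, μ.part k - 1), (k, μ.part k)}, ⟨k, μ.part k - 1, Or.inl ?_⟩, ?_, ?_⟩
  · rw [Function.update_of_ne (by omega), μ.part_zero]
  · intro i j hi hij
    simp only [Function.update_apply]
    split_ifs with hj hi'
    · exact le_rfl
    · have := μ.antitone hi (hj ▸ hij)
      omega
    · have := μ.antitone (show 1 ≤ k + 1 by omega) (show k + 1 ≤ j by omega)
      omega
    · exact μ.antitone hi hij
  · rw [Function.update_of_ne (by omega), hN i (le_of_max_le_left hi)]
  · rw [Nat.sub_add_cancel (by omega)]
  · rw [Set.disjoint_right]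
    rintro _ (rfl | rfl) ⟨-, -, h'⟩ <;> dsimp only at h' <;> rw [Function.update_self] at h' <;>
      omega
  · ext ⟨i, j⟩
    rcases eq_or_ne i k with rfl | hik
    · simp only [cellsFn, Set.mem_union, Set.mem_insert_iff, Set.mem_singleton_iff, Prod.mk.injEq,
        Set.mem_ofPred_eq, Function.update_self, true_and]
      constructor <;> intro <;> omega
    · simp [cellsFn, hik]

lemma exists_extendsByDomino_of_vertical {k : ℕ} (hk : 1 ≤ k)
    (h₁ : μ.part (k + 1) = μ.part k) (h₂ : μ.part (k + 2) < μ.part k) :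
    ∃ ν : PartitionOneIdx, ExtendsByDomino μ.part ν.part := by
  obtain ⟨N, hN⟩ := μ.finite
  refine ⟨⟨fun i => if i = k ∨ i = k + 1 then μ.part k - 1 else μ.part i, ?_, ?_,
    ⟨max N (k + 2), fun i hi => ?_⟩⟩,
    {(k, μ.part k), (k + 1, μ.part k)}, ⟨k, μ.part k, Or.inr rfl⟩, ?_, ?_⟩
  · rw [if_neg (by omega), μ.part_zero]
  · intro i j hi hij
    split_ifs with hj hi'
    · exact le_rfl
    · have := μ.antitone hi (show i ≤ k by omega)
      omega
    · have := μ.antitone (show 1 ≤ k + 2 by omega) (show k + 2 ≤ j by omega)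
      omega
    · exact μ.antitone hi hij
  · rw [if_neg (by omega), hN i (le_of_max_le_left hi)]
  · rw [Set.disjoint_right]
    rintro _ (rfl | rfl) ⟨-, -, h'⟩ <;> dsimp only at h' <;> rw [if_pos (by omega)] at h' <;>
      omega
  · ext ⟨i, j⟩
    by_cases hik : i = k ∨ i = k + 1
    · rcases hik with rfl | rfl <;>
      · simp only [cellsFn, Set.mem_union, Set.mem_insert_iff, Set.mem_singleton_iff,
          Prod.mk.injEq, Set.mem_ofPred_eq, true_or, or_true, if_true, h₁, true_and]
        constructor <;> intro <;> omega
    · simp only [cellsFn, Set.mem_union, Set.mem_insert_iff, Set.mem_singleton_iff, Prod.mk.injEq,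
        Set.mem_ofPred_eq, hik, if_false]
      omega

lemma eq_staircase (hH : ∀ k, 1 ≤ k → μ.part k < μ.part (k + 1) + 2)
    (hV : ∀ k, 1 ≤ k → μ.part (k + 1) = μ.part k → μ.part k ≤ μ.part (k + 2)) :
    ∀ i, 1 ≤ i → μ.part i = μ.part 1 + 1 - i := by
  obtain ⟨N, hN⟩ := μ.finite
  -- a repeated nonzero row length would, by `hV`, repeat forever
  have hne : ∀ i, 1 ≤ i → 0 < μ.part i → μ.part (i + 1) ≠ μ.part i := by
    intro i hi hpos heq
    have hconst : ∀ t, μ.part (i + t) = μ.part i ∧ μ.part (i + t + 1) = μ.part i := by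
      intro t
      induction t with
      | zero => exact ⟨rfl, heq⟩
      | succ t ih =>
        have h₁ := hV (i + t) (by omega) (ih.2.trans ih.1.symm)
        have h₂ := μ.antitone hi (show i ≤ i + t + 2 by omega)
        show μ.part (i + t + 1) = μ.part i ∧ μ.part (i + t + 2) = μ.part i
        exact ⟨ih.2, by omega⟩
    have := (hconst N).1
    rw [hN _ (by omega)] at this
    omega
  intro i hi
  induction i, hi using Nat.le_induction with
  | base => omega
  | succ i hi ih =>
    have h₁ := hH i hi
    have h₂ := μ.antitone hi (show i ≤ i + 1 by omega)
    by_cases hpos : 0 < μ.part i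
    · have := hne i hi hpos
      omega
    · omega

lemma exists_extendsByDomino (h : ¬ ∀ i, 1 ≤ i → μ.part i = μ.part 1 + 1 - i) :
    ∃ ν : PartitionOneIdx, ExtendsByDomino μ.part ν.part := by
  by_cases hH : ∃ k, 1 ≤ k ∧ μ.part (k + 1) + 2 ≤ μ.part k
  · obtain ⟨k, hk, hlt⟩ := hH
    exact μ.exists_extendsByDomino_of_horizontal hk hlt
  by_cases hV : ∃ k, 1 ≤ k ∧ μ.part (k + 1) = μ.part k ∧ μ.part (k + 2) < μ.part k
  · obtain ⟨k, hk, h₁, h₂⟩ := hV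
    exact μ.exists_extendsByDomino_of_vertical hk h₁ h₂
  push Not at hH hV
  exact absurd (μ.eq_staircase hH hV) h

lemma hasDominoTiling_of_charge_eq_zero (h : charge (cellsFn μ.part) = 0) :
    HasDominoTiling μ.part := by
  induction hn : (cellsFn μ.part).ncard using Nat.strong_induction_on generalizing μ with
  | _ n ih =>
  by_cases hst : ∀ i, 1 ≤ i → μ.part i = μ.part 1 + 1 - i
  · have h₁ : μ.part 1 = 0 := by
      by_contra h₁
      exact charge_cellsFn_ne_zero_of_staircase (by omega) hst h
    have hempty : cellsFn μ.part = ∅ := by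
      refine Set.eq_empty_of_forall_notMem fun ⟨i, j⟩ ⟨hi, hj, hji⟩ => ?_
      have := hst i hi
      simp only at hji
      omega
    exact ⟨∅, by simp, Set.pairwiseDisjoint_empty, by rw [Set.sUnion_empty, hempty]⟩
  · obtain ⟨ν, hν⟩ := μ.exists_extendsByDomino hst
    exact hν.hasDominoTiling (ih _ (hn ▸ hν.ncard_lt μ.finite_cellsFn) ν
      (hν.charge_eq ν.finite_cellsFn ▸ h) rfl)

theorem hasDominoTiling_iff_charge_eq_zero :
    HasDominoTiling μ.part ↔ charge (cellsFn μ.part) = 0 :=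
  ⟨fun ⟨_, hD, hdisj, hU⟩ => charge_eq_zero_of_tiling μ.finite_cellsFn hD hdisj hU,
    μ.hasDominoTiling_of_charge_eq_zero⟩

end PartitionOneIdx

theorem two_core_iff_beta_numbers_general (m : ℕ) (μ : PartitionOneIdx)
    (hlen : μ.part (2 * m + 1) = 0) :
    HasDominoTiling μ.part ↔
      ((Finset.Icc 1 (2 * m)).filter (fun i => Even (μ.part i + 2 * m - i))).card = m ∧
      ((Finset.Icc 1 (2 * m)).filter (fun i => Odd (μ.part i + 2 * m - i))).card = m := by
  have hz : ∀ i, 2 * m < i → μ.part i = 0 := fun i hi =>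
    Nat.eq_zero_of_le_zero (hlen ▸ μ.antitone (by omega) hi)
  have hsplit := card_filter_add_card_filter_not (s := Icc 1 (2 * m))
    (fun i => Even (μ.part i + 2 * m - i))
  simp only [Nat.not_even_iff_odd, Nat.card_Icc] at hsplit
  rw [μ.hasDominoTiling_iff_charge_eq_zero, charge_cellsFn_eq_card_even_sub hz]
  omega

/-- for a partition `λ` with at most `2m` parts, the Young diagram of `λ`
can be tiled by dominoes iff the sequence `λ_i + 2m − i`, `1 ≤ i ≤ 2m`, contains exactly
`m` even and exactly `m` odd integers. -/
theorem two_core_iff_beta_numbers (m : ℕ) (hm : 0 < m) (μ : PartitionOneIdx)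
    (hlen : μ.part (2 * m + 1) = 0) :
    HasDominoTiling μ.part ↔
      ((Finset.Icc 1 (2 * m)).filter (fun i => Even (μ.part i + 2 * m - i))).card = m ∧
      ((Finset.Icc 1 (2 * m)).filter (fun i => Odd (μ.part i + 2 * m - i))).card = m :=
  two_core_iff_beta_numbers_general m μ hlen
end

section
/- Let n be a positive integer and let λ be a partition with at most 2n parts, padded with zeros so that λ_1, …, λ_{2n} are defined. Then b(λ) = Σ_{i=1}^{2n} Σ_{j=1}^{λ_i+2n−i} (−1)^{λ_i − i − j + 1}(λ_i − i) − Σ_{1≤i<j≤2n} (−1)^{λ_i − λ_j + j − i}(λ_i − i). -/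
/-- A partition `λ`, 1-indexed: `λ_i = part i` for `i ≥ 1`. -/
structure NatPartition where
  part : ℕ → ℕ
  part_zero : part 0 = 0
  antitone : ∀ ⦃i j : ℕ⦄, 1 ≤ i → i ≤ j → part j ≤ part i
  finite : ∃ N : ℕ, ∀ i : ℕ, N ≤ i → part i = 0

/-!
Row `i` of `b(λ)` is `(-1)^(λ_i + i + 1) (λ_i - i)` times the column sum `Σ_{j ≤ λ_i} (-1)^(λ'_j + j)`.
On the columns `λ_{k+1} < j ≤ λ_k` one has `λ'_j = k`, so the column sum telescopes over the rows
`k ≥ i`: twice it equals `(-1)^(λ_i + i) - (-1)^N + 2 Σ_{i < k ≤ N} (-1)^(λ_k + k)` when `λ_{N+1} = 0`.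
For `N = 2n` even, `((-1)^(λ_i + i) - 1) / 2` is the alternating sum `Σ_{j ≤ λ_i + 2n - i} (-1)^j`,
and the remaining terms are the pair sum over `i < k ≤ 2n`.
-/

open Finset

theorem Nat.Icc_one_eq_Ioc_zero (m : ℕ) : Icc 1 m = Ioc 0 m := Icc_add_one_left_eq_Ioc 0 m

theorem two_mul_sum_Ioc_neg_one_pow {a b : ℕ} (hab : a ≤ b) :
    2 * ∑ j ∈ Ioc a b, (-1 : ℤ) ^ j = (-1) ^ b - (-1) ^ a := by
  induction b, hab using Nat.le_induction with
  | base => simp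
  | succ b hab ih =>
    rw [sum_Ioc_succ_top hab, mul_add, ih, pow_succ]
    ring

theorem two_mul_sum_Icc_one_neg_one_pow (m : ℕ) :
    2 * ∑ j ∈ Icc 1 m, (-1 : ℤ) ^ j = (-1) ^ m - 1 := by
  rw [Nat.Icc_one_eq_Ioc_zero, two_mul_sum_Ioc_neg_one_pow m.zero_le, pow_zero]

namespace NatPartition

variable (μ : NatPartition)

theorem part_eq_zero_of_lt {N i : ℕ} (hN : μ.part (N + 1) = 0) (hi : N < i) : μ.part i = 0 :=
  Nat.eq_zero_of_le_zero (hN ▸ μ.antitone N.succ_pos hi)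

theorem conjFn_eq_of_mem_Ioc {i j : ℕ} (hj : j ∈ Ioc (μ.part (i + 1)) (μ.part i)) :
    conjFn μ.part j = i := by
  rw [mem_Ioc] at hj
  have hrows : {k : ℕ | 1 ≤ k ∧ j ≤ μ.part k} = ↑(Icc 1 i) := by
    ext k
    simp only [Set.mem_ofPred_eq, coe_Icc, Set.mem_Icc]
    refine ⟨fun ⟨hk, hjk⟩ => ⟨hk, ?_⟩, fun ⟨hk, hki⟩ => ⟨hk, hj.2.trans (μ.antitone hk hki)⟩⟩
    by_contra! hik
    have := μ.antitone (Nat.le_add_left 1 i) hik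
    omega
  rw [conjFn, hrows, Set.ncard_coe_finset, Nat.card_Icc, Nat.add_sub_cancel]

theorem two_mul_sum_Ioc_neg_one_pow_conjFn {k : ℕ} (hk : 1 ≤ k) :
    2 * ∑ j ∈ Ioc (μ.part (k + 1)) (μ.part k), (-1 : ℤ) ^ (conjFn μ.part j + j)
      = (-1) ^ (μ.part k + k) - (-1) ^ (μ.part (k + 1) + k) := by
  rw [sum_congr rfl fun j hj => by rw [μ.conjFn_eq_of_mem_Ioc hj, pow_add], ← mul_sum,
    mul_left_comm, two_mul_sum_Ioc_neg_one_pow (μ.antitone hk k.le_succ)]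
  ring

theorem two_mul_sum_Icc_neg_one_pow_conjFn {N i : ℕ} (hN : μ.part (N + 1) = 0) (hi : 1 ≤ i)
    (hiN : i ≤ N) :
    2 * ∑ j ∈ Icc 1 (μ.part i), (-1 : ℤ) ^ (conjFn μ.part j + j)
      = (-1) ^ (μ.part i + i) - (-1) ^ N + 2 * ∑ k ∈ Ioc i N, (-1 : ℤ) ^ (μ.part k + k) := by
  induction hiN using Nat.decreasingInduction with
  | self =>
    rw [Nat.Icc_one_eq_Ioc_zero, ← hN, two_mul_sum_Ioc_neg_one_pow_conjFn μ hi, hN]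
    simp
  | of_succ k hkN ih =>
    rw [Nat.Icc_one_eq_Ioc_zero, ← sum_Ioc_consecutive _ (Nat.zero_le _)
      (μ.antitone hi k.le_succ), mul_add, ← Nat.Icc_one_eq_Ioc_zero, ih (by omega),
      two_mul_sum_Ioc_neg_one_pow_conjFn μ hi, ← sum_Ioc_consecutive _ k.le_succ hkN,
      Nat.Ioc_succ_singleton, sum_singleton, ← add_assoc, pow_succ]
    ring

theorem bFn_eq_sum_Icc {N : ℕ} (hN : μ.part (N + 1) = 0) :
    bFn μ.part = ∑ i ∈ Icc 1 N, ∑ j ∈ Icc 1 (μ.part i),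
      (-1 : ℤ) ^ (μ.part i + conjFn μ.part j + i + j + 1) * ((μ.part i : ℤ) - i) := by
  refine finsum_eq_sum_of_support_subset _ fun i hi => ?_
  rw [coe_Icc, Set.mem_Icc]
  by_contra! hiN
  have hpart : μ.part i = 0 := by
    rcases Nat.eq_zero_or_pos i with rfl | hi1
    · exact μ.part_zero
    · exact μ.part_eq_zero_of_lt hN (hiN hi1)
  simp [hpart] at hi

theorem row_sum_neg_one_pow_eq_staircase {n i : ℕ} (hlen : μ.part (2 * n + 1) = 0) (hi : 1 ≤ i)
    (hin : i ≤ 2 * n) :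
    ∑ j ∈ Icc 1 (μ.part i), (-1 : ℤ) ^ (μ.part i + conjFn μ.part j + i + j + 1)
      = ∑ j ∈ Icc 1 (μ.part i + 2 * n - i), (-1 : ℤ) ^ (μ.part i + i + j + 1)
        - ∑ j ∈ Ioc i (2 * n), (-1 : ℤ) ^ (μ.part i + μ.part j + i + j) := by
  set s : ℤ := (-1) ^ (μ.part i + i + 1)
  have hcols : ∑ j ∈ Icc 1 (μ.part i), (-1 : ℤ) ^ (μ.part i + conjFn μ.part j + i + j + 1)
      = s * ∑ j ∈ Icc 1 (μ.part i), (-1 : ℤ) ^ (conjFn μ.part j + j) := by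
    rw [mul_sum]
    exact sum_congr rfl fun j _ => by rw [← pow_add]; ring_nf
  have hstair : ∑ j ∈ Icc 1 (μ.part i + 2 * n - i), (-1 : ℤ) ^ (μ.part i + i + j + 1)
      = s * ∑ j ∈ Icc 1 (μ.part i + 2 * n - i), (-1 : ℤ) ^ j := by
    rw [mul_sum]
    exact sum_congr rfl fun j _ => by rw [← pow_add]; ring_nf
  have hpairs : ∑ j ∈ Ioc i (2 * n), (-1 : ℤ) ^ (μ.part i + μ.part j + i + j)
      = -(s * ∑ j ∈ Ioc i (2 * n), (-1 : ℤ) ^ (μ.part j + j)) := by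
    rw [mul_sum, ← sum_neg_distrib]
    exact sum_congr rfl fun j _ => by rw [← pow_add]; ring_nf
  have hparity : (-1 : ℤ) ^ (μ.part i + 2 * n - i) = (-1) ^ (μ.part i + i) :=
    neg_one_pow_congr (by simp only [Nat.even_iff]; omega)
  have hcol := μ.two_mul_sum_Icc_neg_one_pow_conjFn hlen hi hin
  have hgeom := two_mul_sum_Icc_one_neg_one_pow (μ.part i + 2 * n - i)
  rw [hcols, hstair, hpairs, sub_neg_eq_add, ← mul_add]
  congr 1
  rw [pow_mul, neg_one_sq, one_pow] at hcol
  rw [hparity] at hgeom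
  linarith

end NatPartition

theorem b_eq_staircase_sum_general (n : ℕ) (μ : NatPartition)
    (hlen : μ.part (2 * n + 1) = 0) :
    bFn μ.part =
      (∑ i ∈ Finset.Icc 1 (2 * n), ∑ j ∈ Finset.Icc 1 (μ.part i + 2 * n - i),
        (-1 : ℤ) ^ (μ.part i + i + j + 1) * ((μ.part i : ℤ) - (i : ℤ)))
      - ∑ i ∈ Finset.Icc 1 (2 * n), ∑ j ∈ Finset.Ioc i (2 * n),
          (-1 : ℤ) ^ (μ.part i + μ.part j + i + j) * ((μ.part i : ℤ) - (i : ℤ)) := by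
  rw [μ.bFn_eq_sum_Icc hlen, ← sum_sub_distrib]
  refine sum_congr rfl fun i hi => ?_
  obtain ⟨hi1, hi2⟩ := mem_Icc.mp hi
  rw [← sum_mul, ← sum_mul, ← sum_mul, ← sub_mul, μ.row_sum_neg_one_pow_eq_staircase hlen hi1 hi2]

/-- for `λ` with at most `2n` parts,
`b(λ) = Σ_{i=1}^{2n} Σ_{j=1}^{λ_i+2n−i} (−1)^{λ_i−i−j+1}(λ_i−i)
        − Σ_{1≤i<j≤2n} (−1)^{λ_i−λ_j+j−i}(λ_i−i)`,
where the exponents of `−1` are replaced by natural numbers of the same parity. -/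
theorem b_eq_staircase_sum (n : ℕ) (hn : 0 < n) (μ : NatPartition)
    (hlen : μ.part (2 * n + 1) = 0) :
    bFn μ.part =
      (∑ i ∈ Finset.Icc 1 (2 * n), ∑ j ∈ Finset.Icc 1 (μ.part i + 2 * n - i),
        (-1 : ℤ) ^ (μ.part i + i + j + 1) * ((μ.part i : ℤ) - (i : ℤ)))
      - ∑ i ∈ Finset.Icc 1 (2 * n), ∑ j ∈ Finset.Ioc i (2 * n),
          (-1 : ℤ) ^ (μ.part i + μ.part j + i + j) * ((μ.part i : ℤ) - (i : ℤ)) :=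
  b_eq_staircase_sum_general n μ hlen
end
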